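/- arXiv:1705.06153 — 4 statements merged into one kernel-verified Lean document; each statement's English description precedes it below -/
import Mathlib

section
/- Suppose nonnegative reals (v_k)_{2 ≤ k ≤ K} satisfy v_2 ≤ n^2 and v_{k+1} ≤ (k/(n-k)) v_k + 6 n^2/(β^2 k^2) for 2 ≤ k ≤ K-1, where K = (1-β)n/2 and 0 < β < 1. Then there exists a constant c_β depending only on β such that v_{k+1} ≤ c_β n^2/k^2 for all 2 ≤ k ≤ K-1. -/
/-!
For `k < K` the ratio `k / (n - k)` is at most `ρ = (1 - β) / (1 + β) < 1`, so the recursion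
is a contraction perturbed by `6 n² / (β² k²)`. A profile `C n² / k²` is not preserved by the
contraction for small `k`, since `ρ (k + 1)² / k²` may exceed `1`; the shifted profile
`C n² / (k + 3/β)²` is, because `(s + 1)² ≤ (1 + β) s²` once `β s ≥ 3`. Comparison with this
supersolution of the recursion then bounds `v`.
-/

theorem le_of_affine_recurrence_le {α : Type*} [Semiring α] [PartialOrder α] [IsOrderedRing α]
    {u f a b : ℕ → α} {m₀ N : ℕ} (h₀ : u m₀ ≤ f m₀)
    (hu : ∀ m, m₀ ≤ m → m < N → u (m + 1) ≤ a m * u m + b m)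
    (ha : ∀ m, m₀ ≤ m → m < N → 0 ≤ a m)
    (hf : ∀ m, m₀ ≤ m → m < N → a m * f m + b m ≤ f (m + 1)) :
    ∀ m, m₀ ≤ m → m ≤ N → u m ≤ f m := by
  intro m hm
  induction m, hm using Nat.le_induction with
  | base => exact fun _ => h₀
  | succ m hm ih =>
    intro hmN
    have hmN' : m < N := by omega
    calc u (m + 1) ≤ a m * u m + b m := hu m hm hmN'
      _ ≤ a m * f m + b m := by gcongr; exacts [ha m hm hmN', ih hmN'.le]
      _ ≤ f (m + 1) := hf m hm hmN'

theorem div_sub_le_of_le_mul_half {β x n : ℝ} (hβ₀ : -1 < β) (hβ₁ : β < 1) (hx : 0 < x)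
    (hxn : x ≤ (1 - β) * n / 2) : 0 < n - x ∧ x / (n - x) ≤ (1 - β) / (1 + β) := by
  have hn : 0 < n := by nlinarith
  have hpos : 0 < n - x := by nlinarith
  refine ⟨hpos, ?_⟩
  rw [div_le_div_iff₀ hpos (by linarith)]
  nlinarith

theorem sq_add_one_le_of_three_le_mul {β s : ℝ} (hs : 1 ≤ s) (hβs : 3 ≤ β * s) :
    (s + 1) ^ 2 ≤ (1 + β) * s ^ 2 := by
  nlinarith

/-- `β C` absorbs the forcing term because `m + 1 + 3/β ≤ (2 + 3/β) m`, and `C ≥ (2 + 3/β)²`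
covers the initial value `v 2 ≤ n²`. -/
noncomputable def varianceConstant (β : ℝ) : ℝ := 6 * (2 + 3 / β) ^ 2 / β ^ 3

theorem le_varianceConstant_mul_div {β N : ℝ} (hβ₀ : 0 < β) (hβ₁ : β ≤ 1) (hN : 0 ≤ N) :
    N ≤ varianceConstant β * N / (2 + 3 / β) ^ 2 := by
  have hC : varianceConstant β * N / (2 + 3 / β) ^ 2 = 6 / β ^ 3 * N := by
    unfold varianceConstant; field_simp
  have hβ3 : β ^ 3 ≤ 1 := pow_le_one₀ hβ₀.le hβ₁
  rw [hC]
  exact le_mul_of_one_le_left hN ((one_le_div (by positivity)).2 (by linarith))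

theorem varianceConstant_profile_step {β a m N : ℝ} (hβ₀ : 0 < β) (hβ₁ : β ≤ 1)
    (hm : 1 ≤ m) (ha : a ≤ (1 - β) / (1 + β)) (hN : 0 ≤ N) :
    a * (varianceConstant β * N / (m + 3 / β) ^ 2) + 6 * N / (β ^ 2 * m ^ 2) ≤
      varianceConstant β * N / (m + 1 + 3 / β) ^ 2 := by
  set C := varianceConstant β with hC
  set s := m + 3 / β with hs
  have h3β : 0 < 3 / β := by positivity
  have hs1 : 1 ≤ s := by linarith
  have hβs : 3 ≤ β * s := by
    have : β * s = β * m + 3 := by rw [hs]; field_simp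
    nlinarith
  have hgrow := sq_add_one_le_of_three_le_mul hs1 hβs
  have hCN : 0 ≤ C * N := by rw [hC]; unfold varianceConstant; positivity
  have hcontract : a * (C * N / s ^ 2) ≤ (1 - β) * (C * N / (s + 1) ^ 2) :=
    calc a * (C * N / s ^ 2) ≤ (1 - β) / (1 + β) * (C * N / s ^ 2) := by gcongr
      _ = (1 - β) * (C * N / ((1 + β) * s ^ 2)) := by field_simp
      _ ≤ (1 - β) * (C * N / (s + 1) ^ 2) := by gcongr
  have hforcing : 6 * N / (β ^ 2 * m ^ 2) ≤ β * (C * N / (s + 1) ^ 2) :=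
    calc 6 * N / (β ^ 2 * m ^ 2)
          = 6 * N * (2 + 3 / β) ^ 2 / (β ^ 2 * ((2 + 3 / β) * m) ^ 2) := by field_simp
      _ ≤ 6 * N * (2 + 3 / β) ^ 2 / (β ^ 2 * (s + 1) ^ 2) := by
          gcongr; nlinarith
      _ = β * (C * N / (s + 1) ^ 2) := by rw [hC]; unfold varianceConstant; field_simp
  have hs' : m + 1 + 3 / β = s + 1 := by ring
  rw [hs']
  linarith

/-- If nonnegative reals `(v_k)` satisfy `v_2 ≤ n²` and
`v_{k+1} ≤ (k/(n-k)) v_k + 6n²/(β²k²)` for `2 ≤ k ≤ K-1` with `K = ⌊(1-β)n/2⌋`, `0 < β < 1`,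
then there is a constant `c_β` depending only on `β` with `v_{k+1} ≤ c_β n²/k²` for all
`2 ≤ k ≤ K-1`. -/
theorem variance_recursion (β : ℝ) (hβ0 : 0 < β) (hβ1 : β < 1) :
    ∃ c : ℝ, ∀ (n : ℕ), 0 < n → ∀ v : ℕ → ℝ,
      (∀ k, 0 ≤ v k) →
      v 2 ≤ (n : ℝ) ^ 2 →
      (∀ k : ℕ, 2 ≤ k → k ≤ ⌊(1 - β) * (n : ℝ) / 2⌋₊ - 1 →
        v (k + 1) ≤ ((k : ℝ) / ((n : ℝ) - (k : ℝ))) * v k + 6 * (n : ℝ) ^ 2 / (β ^ 2 * (k : ℝ) ^ 2)) →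
      ∀ k : ℕ, 2 ≤ k → k ≤ ⌊(1 - β) * (n : ℝ) / 2⌋₊ - 1 →
        v (k + 1) ≤ c * (n : ℝ) ^ 2 / (k : ℝ) ^ 2 := by
  refine ⟨varianceConstant β, fun n _ v _ h2 hrec k hk2 hkK => ?_⟩
  set K := ⌊(1 - β) * (n : ℝ) / 2⌋₊
  have hcoef (m : ℕ) (hm : 2 ≤ m) (hmK : m < K) :
      0 < (n : ℝ) - m ∧ (m : ℝ) / (n - m) ≤ (1 - β) / (1 + β) :=
    div_sub_le_of_le_mul_half (by linarith) hβ1 (by positivity)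
      ((Nat.cast_le.2 hmK.le).trans
        (Nat.floor_le (div_nonneg (mul_nonneg (by linarith) n.cast_nonneg) zero_le_two)))
  have hprofile := le_of_affine_recurrence_le (u := v)
    (f := fun m => varianceConstant β * (n : ℝ) ^ 2 / ((m : ℝ) + 3 / β) ^ 2)
    (b := fun m => 6 * (n : ℝ) ^ 2 / (β ^ 2 * (m : ℝ) ^ 2)) (N := K)
    (h2.trans (by exact_mod_cast le_varianceConstant_mul_div hβ0 hβ1.le (by positivity)))
    (fun m hm hmK => hrec m hm (by omega))
    (fun m hm hmK => div_nonneg (Nat.cast_nonneg _) (hcoef m hm hmK).1.le)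
    (fun m hm hmK => by
      simpa using varianceConstant_profile_step hβ0 hβ1.le
        (by exact_mod_cast (by omega : 1 ≤ m)) (hcoef m hm hmK).2 (sq_nonneg (n : ℝ)))
  calc v (k + 1) ≤ varianceConstant β * (n : ℝ) ^ 2 / (((k + 1 : ℕ) : ℝ) + 3 / β) ^ 2 :=
        hprofile (k + 1) (by omega) (by omega)
    _ ≤ varianceConstant β * (n : ℝ) ^ 2 / (k : ℝ) ^ 2 := by
        have : 0 ≤ varianceConstant β := by unfold varianceConstant; positivity
        gcongr
        push_cast
        linarith [(by positivity : (0 : ℝ) < 3 / β)]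
end

section
/- For the Hamming weight chain of the stratified hypercube walk, E[D_{t+1}^2 − D_t^2 | H_t] = −4 H_t D_t (D_t + 1/2)/(n(n−1)) + H_t/n, where D_t = n/2 − H_t. In particular, E[D_{t+1}^2 − D_t^2 | H_t] ≤ −4 H_t D_t^2/n^2 + 2. -/
/-!
Since `D` moves by `±1`, the drift of `D²` is `(p₊ + p₋) + 2 D (p₊ - p₋)`. For the Hamming chain
`p₊ + p₋ = k / n` and `p₊ - p₋ = -2 k (D + 1/2) / (n (n - 1))`, which is the identity. After clearing
denominators the bound becomes the cubic inequality `k (6 n k - 4 k² - n² - n) ≤ 2 n² (n - 1)` on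
`0 ≤ k ≤ n`, which follows by completing the square in `k`.
-/

theorem drift_sq_of_unit_steps {R : Type*} [CommRing R] (p q D : R) :
    p * ((D + 1) ^ 2 - D ^ 2) + q * ((D - 1) ^ 2 - D ^ 2) = (p + q) + 2 * D * (p - q) := by
  ring

theorem hammingStep_prob_add {n k : ℝ} (hn : n ≠ 0) (hn1 : n - 1 ≠ 0) :
    k * (k - 1) / (n * (n - 1)) + k * (n - k) / (n * (n - 1)) = k / n := by
  field_simp
  ring

theorem hamming_cubic_le {n k : ℝ} (hn : 2 ≤ n) (hk : 0 ≤ k) (hkn : k ≤ n) :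
    k * (6 * n * k - 4 * k ^ 2 - n ^ 2 - n) ≤ 2 * n ^ 2 * (n - 1) :=
  calc k * (6 * n * k - 4 * k ^ 2 - n ^ 2 - n)
      = k * (5 / 4 * n ^ 2 - n) - k * (2 * k - 3 / 2 * n) ^ 2 := by ring
    _ ≤ k * (5 / 4 * n ^ 2 - n) := sub_le_self _ (by positivity)
    _ ≤ n * (5 / 4 * n ^ 2 - n) := by gcongr; nlinarith
    _ ≤ 2 * n ^ 2 * (n - 1) := by nlinarith

theorem hamming_drift_le {n k : ℝ} (hn : 2 ≤ n) (hk : 0 ≤ k) (hkn : k ≤ n) :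
    -4 * k * (n / 2 - k) * (n / 2 - k + 1 / 2) / (n * (n - 1)) + k / n
      ≤ -4 * k * (n / 2 - k) ^ 2 / n ^ 2 + 2 := by
  have hn0 : n ≠ 0 := by positivity
  have hn1 : 0 < n - 1 := by linarith
  have hgap : -4 * k * (n / 2 - k) ^ 2 / n ^ 2 + 2
      - (-4 * k * (n / 2 - k) * (n / 2 - k + 1 / 2) / (n * (n - 1)) + k / n)
      = (2 * n ^ 2 * (n - 1) - k * (6 * n * k - 4 * k ^ 2 - n ^ 2 - n)) / (n ^ 2 * (n - 1)) := by
    field_simp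
    ring
  rw [← sub_nonneg, hgap]
  have := hamming_cubic_le hn hk hkn
  exact div_nonneg (by linarith) (by positivity)

theorem drift_identity_Dsq_general (n k : ℕ) (hn : 2 ≤ n) (hkn : k ≤ n)
    (D drift : ℝ) (hD : D = (n : ℝ) / 2 - (k : ℝ))
    (hdrift : drift = ((k : ℝ) * ((k : ℝ) - 1) / ((n : ℝ) * ((n : ℝ) - 1))) * ((D + 1) ^ 2 - D ^ 2)
      + ((k : ℝ) * ((n : ℝ) - (k : ℝ)) / ((n : ℝ) * ((n : ℝ) - 1))) * ((D - 1) ^ 2 - D ^ 2)) :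
    drift = -4 * (k : ℝ) * D * (D + 1 / 2) / ((n : ℝ) * ((n : ℝ) - 1)) + (k : ℝ) / (n : ℝ)
    ∧ drift ≤ -4 * (k : ℝ) * D ^ 2 / (n : ℝ) ^ 2 + 2 := by
  have hn' : (2 : ℝ) ≤ n := by exact_mod_cast hn
  have hidentity : drift = -4 * (k : ℝ) * D * (D + 1 / 2) / (n * (n - 1)) + k / n := by
    rw [hdrift, drift_sq_of_unit_steps, hammingStep_prob_add (by positivity) (by linarith), hD]
    ring
  refine ⟨hidentity, ?_⟩
  rw [hidentity, hD]
  exact hamming_drift_le hn' k.cast_nonneg (by exact_mod_cast hkn)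

/-- For the Hamming-weight chain, with `H_t = k` (`1 ≤ k ≤ n`) and
`D = n/2 - k`, the conditional drift of `D²` (where `D` increases by `1` with probability
`k(k-1)/(n(n-1))` and decreases by `1` with probability `k(n-k)/(n(n-1))`) satisfies
`E[D²_{t+1} - D²_t | H_t] = -4 k D (D + 1/2)/(n(n-1)) + k/n ≤ -4 k D²/n² + 2`. -/
theorem drift_identity_Dsq (n k : ℕ) (hn : 2 ≤ n) (hk1 : 1 ≤ k) (hkn : k ≤ n)
    (D drift : ℝ) (hD : D = (n : ℝ) / 2 - (k : ℝ))
    (hdrift : drift = ((k : ℝ) * ((k : ℝ) - 1) / ((n : ℝ) * ((n : ℝ) - 1))) * ((D + 1) ^ 2 - D ^ 2)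
      + ((k : ℝ) * ((n : ℝ) - (k : ℝ)) / ((n : ℝ) * ((n : ℝ) - 1))) * ((D - 1) ^ 2 - D ^ 2)) :
    drift = -4 * (k : ℝ) * D * (D + 1 / 2) / ((n : ℝ) * ((n : ℝ) - 1)) + (k : ℝ) / (n : ℝ)
    ∧ drift ≤ -4 * (k : ℝ) * D ^ 2 / (n : ℝ) ^ 2 + 2 :=
  drift_identity_Dsq_general n k hn hkn D drift hD hdrift
end

section
/- Let (y_t) be nonnegative reals with y_0 ≤ n and y_{t+1} ≤ (1 − 1/n) y_t + e^{−8t/(7n)} + 4/n for all t ≥ 0. Then there exist absolute constants a, b ≥ 0 such that y_t ≤ a n e^{−t/n} + b for all t. -/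
/-! `n e^{-t/n} (17 - 16 e^{-t/(7n)}) + 4` is a supersolution of the recursion. The constant `4`
is the fixed point of `z ↦ (1 - 1/n) z + 4/n`, and `1 - 1/n ≤ e^{-1/n}` lets the main term
dominate its own image; the forcing `e^{-8t/(7n)}` is paid for by the decay of the correction
`-16 n e^{-t/n} e^{-t/(7n)}`, which releases `16 n e^{-(t+1)/n} e^{-t/(7n)} (1 - e^{-1/(7n)})`,
at least `e^{-8t/(7n)}` once `n ≥ 2`. -/

open Real

theorem le_pow_mul_sub_pow_add_of_le_mul_add {r u v c d A B K : ℝ} {y : ℕ → ℝ}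
    (hr : 0 ≤ r) (hru : r ≤ u) (hv₀ : 0 ≤ v) (hv₁ : v ≤ 1) (hB : 0 ≤ B) (hBA : B ≤ A)
    (hc : c ≤ B * u * (1 - v)) (hK : r * K + d ≤ K) (hy₀ : y 0 ≤ A - B + K)
    (hy : ∀ t, y (t + 1) ≤ r * y t + c * (u * v) ^ t + d) (t : ℕ) :
    y t ≤ u ^ t * (A - B * v ^ t) + K := by
  induction t with
  | zero => simpa using hy₀
  | succ t ih =>
    have hu : 0 ≤ u := hr.trans hru
    have hgap : 0 ≤ A - B * v ^ t := by
      linarith [mul_le_of_le_one_right hB (pow_le_one₀ hv₀ hv₁ (n := t))]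
    have hdecay : r * (u ^ t * (A - B * v ^ t)) ≤ u ^ (t + 1) * (A - B * v ^ t) := by
      calc r * (u ^ t * (A - B * v ^ t)) ≤ u * (u ^ t * (A - B * v ^ t)) :=
            mul_le_mul_of_nonneg_right hru (mul_nonneg (pow_nonneg hu t) hgap)
        _ = u ^ (t + 1) * (A - B * v ^ t) := by ring
    have hforcing : c * (u * v) ^ t ≤ B * u * (1 - v) * (u ^ t * v ^ t) := by
      rw [mul_pow]
      exact mul_le_mul_of_nonneg_right hc (mul_nonneg (pow_nonneg hu t) (pow_nonneg hv₀ t))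
    calc y (t + 1) ≤ r * y t + c * (u * v) ^ t + d := hy t
      _ ≤ r * (u ^ t * (A - B * v ^ t) + K) + c * (u * v) ^ t + d := by gcongr
      _ ≤ u ^ (t + 1) * (A - B * v ^ (t + 1)) + K := by
        have hsplit : u ^ (t + 1) * (A - B * v ^ (t + 1))
            = u ^ (t + 1) * (A - B * v ^ t) + B * u * (1 - v) * (u ^ t * v ^ t) := by ring
        linarith

theorem div_one_add_le_one_sub_exp_neg {x : ℝ} (hx : 0 ≤ x) : x / (1 + x) ≤ 1 - exp (-x) := by
  have h : exp (-x) ≤ (1 + x)⁻¹ := by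
    rw [exp_neg]
    exact inv_anti₀ (by positivity) (by linarith [add_one_le_exp x])
  have hx' : x / (1 + x) = 1 - (1 + x)⁻¹ := by field_simp; ring
  linarith

theorem one_le_mul_exp_neg_inv_mul_one_sub_exp {n : ℝ} (hn : 2 ≤ n) :
    1 ≤ 16 * n * exp (-1 / n) * (1 - exp (-1 / (7 * n))) := by
  have hn₀ : 0 < n := by linarith
  have hu : 1 - 1 / n ≤ exp (-1 / n) := by rw [neg_div]; exact one_sub_le_exp_neg _
  have hv : 1 / (7 * n + 1) ≤ 1 - exp (-1 / (7 * n)) := by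
    have h := div_one_add_le_one_sub_exp_neg (x := 1 / (7 * n)) (by positivity)
    rwa [← neg_div, show 1 / (7 * n) / (1 + 1 / (7 * n)) = 1 / (7 * n + 1) by
      field_simp] at h
  have hlow : 1 ≤ 16 * n * (1 - 1 / n) * (1 / (7 * n + 1)) := by
    rw [show 16 * n * (1 - 1 / n) * (1 / (7 * n + 1)) = 16 * (n - 1) / (7 * n + 1) by
      field_simp, le_div_iff₀ (by positivity)]
    linarith
  calc 1 ≤ 16 * n * (1 - 1 / n) * (1 / (7 * n + 1)) := hlow
    _ ≤ 16 * n * exp (-1 / n) * (1 - exp (-1 / (7 * n))) := by gcongr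

theorem exp_neg_eight_mul_div_eq_pow (n : ℝ) (t : ℕ) :
    exp (-8 * t / (7 * n)) = (exp (-1 / n) * exp (-1 / (7 * n))) ^ t := by
  rw [← exp_add, ← exp_nat_mul]
  ring_nf

/-- There are absolute constants `a, b ≥ 0` such that: whenever `n ≥ 2` and
`(y_t)` are nonnegative reals with `y_0 ≤ n` and
`y_{t+1} ≤ (1 - 1/n) y_t + e^{-8t/(7n)} + 4/n`, one has `y_t ≤ a n e^{-t/n} + b` for all `t`. -/
theorem first_moment_recursion :
    ∃ a b : ℝ, 0 ≤ a ∧ 0 ≤ b ∧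
      ∀ (n : ℝ), 2 ≤ n → ∀ y : ℕ → ℝ,
        (∀ t, 0 ≤ y t) → y 0 ≤ n →
        (∀ t : ℕ, y (t + 1) ≤ (1 - 1 / n) * y t + Real.exp (-8 * t / (7 * n)) + 4 / n) →
        ∀ t : ℕ, y t ≤ a * n * Real.exp (-(t : ℝ) / n) + b := by
  refine ⟨17, 4, by norm_num, by norm_num, fun n hn y _ hy₀ hy t ↦ ?_⟩
  have hn₀ : 0 < n := by linarith
  have hr : 0 ≤ 1 - 1 / n := sub_nonneg.mpr ((div_le_one hn₀).mpr (by linarith))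
  have hru : 1 - 1 / n ≤ exp (-1 / n) := by rw [neg_div]; exact one_sub_le_exp_neg _
  have hv₁ : exp (-1 / (7 * n)) ≤ 1 :=
    exp_le_one_iff.mpr (div_nonpos_of_nonpos_of_nonneg (by norm_num) (by positivity))
  have hK : (1 - 1 / n) * 4 + 4 / n ≤ 4 := by field_simp; linarith
  have hbound := le_pow_mul_sub_pow_add_of_le_mul_add (A := 17 * n) (B := 16 * n) hr hru
    (exp_pos _).le hv₁ (by positivity) (by linarith)
    (by simpa using one_le_mul_exp_neg_inv_mul_one_sub_exp hn) hK (by linarith)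
    (fun s ↦ by rw [one_mul, ← exp_neg_eight_mul_div_eq_pow]; exact hy s) t
  have hpow : exp (-1 / n) ^ t = exp (-(t : ℝ) / n) := by
    rw [← exp_nat_mul]; ring_nf
  have hcorr : 0 ≤ 16 * n * exp (-1 / n) ^ t * exp (-1 / (7 * n)) ^ t := by positivity
  rw [← hpow]
  nlinarith
end

section
/- Let ℓ ≥ ⌊n/3⌋ and let x̄ = H(x) for the stratified walk. With the notation of the two-block projection W_t = (X_t, Y_t) and the coupling of two copies with equal Hamming weight H_t, the discrepancy 𝐃_t = X_t − Ẋ_t satisfies, on {t < τ}, E[𝐃_{t+1} − 𝐃_t | Z_t, Ż_t] = −(𝐃_t H_t/(n(n−1)))(1 + (H_t−1)/H_t) ≤ −𝐃_t (2H_t − 1)/n^2, where the increment is +1 with probability p_1^t and −1 with probability p_{−1}^t as given. -/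
/-- In the coupled two-block projection of the stratified walk (two copies with
common Hamming weight `H = X + Y = X' + Y'`, discrepancy `𝐃 = X - X' ≥ 0`), the discrepancy
increment (`+1` with probability `p₁`, `-1` with probability `p₋₁` as given) has conditional
drift `p₁ - p₋₁ = -(𝐃 H/(n(n-1)))(1 + (H-1)/H) ≤ -𝐃(2H-1)/n²`. -/
theorem coupling_drift_identity (n xb H X X' Y Y' p1 pm1 : ℝ)
    (hn : 2 ≤ n) (hH1 : 1 ≤ H) (hHn : H < n)
    (hXY : X + Y = H) (hXY' : X' + Y' = H) (hD : 0 ≤ X - X')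
    (hp1 : p1 = (H / n) * ((n - H) / (n - 1)) * ((xb - X) / (n - H)) * ((n - xb - Y') / (n - H))
      + (H / n) * ((H - 1) / (n - 1)) * (Y / H) * (X' / H))
    (hpm1 : pm1 = (H / n) * ((n - H) / (n - 1)) * ((xb - X') / (n - H)) * ((n - xb - Y) / (n - H))
      + (H / n) * ((H - 1) / (n - 1)) * (X / H) * (Y' / H)) :
    p1 * 1 + pm1 * (-1) = -((X - X') * H / (n * (n - 1))) * (1 + (H - 1) / H)
    ∧ p1 - pm1 ≤ -(X - X') * (2 * H - 1) / n ^ 2 := by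
  have hn0 : (0:ℝ) < n := by linarith
  have hn1 : (0:ℝ) < n - 1 := by linarith
  have hnH : (0:ℝ) < n - H := by linarith
  have hH0 : (0:ℝ) < H := by linarith
  have hY : Y = H - X := by linarith
  have hY' : Y' = H - X' := by linarith
  have key : p1 * 1 + pm1 * (-1)
      = -((X - X') * H / (n * (n - 1))) * (1 + (H - 1) / H) := by
    subst hp1 hpm1 hY hY'
    field_simp
    ring
  refine ⟨key, ?_⟩
  have h2 : p1 - pm1 = -((X - X') * (2 * H - 1)) / (n * (n - 1)) := by
    have e : p1 - pm1 = -((X - X') * H / (n * (n - 1))) * (1 + (H - 1) / H) := by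
      linarith [key]
    rw [e]
    field_simp
    ring
  rw [h2]
  have hnum : 0 ≤ (X - X') * (2 * H - 1) := by
    apply mul_nonneg hD; linarith
  have hle : n * (n - 1) ≤ n ^ 2 := by nlinarith
  rw [div_le_div_iff₀ (by positivity) (by positivity)]
  have : -(X - X') * (2 * H - 1) = -((X - X') * (2 * H - 1)) := by ring
  nlinarith [mul_nonneg hnum (sub_nonneg.mpr hle)]
end
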